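/- arXiv:2311.08197 — 2 statements merged into one kernel-verified Lean document; each statement's English description precedes it below -/
import Mathlib

section
/- Let E and F be normed spaces, U ⊆ E open, and f : U → F a map that is Lipschitz continuous on U and Gateaux differentiable at a point x ∈ U. Then f is strongly Gateaux differentiable at x: for every C¹ curve γ : (-a, a) → U with γ(0) = x, the function s ↦ f(γ(s)) is differentiable at s = 0 with derivative df(x; γ'(0)). -/
/- The curve and the ray `s ↦ x + s • v` agree to first order at `s = 0`, so the Lipschitz bound
makes `f ∘ γ` and `s ↦ f (x + s • v)` agree to first order as well; the Gateaux derivative of `f`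
at `x` in the direction `v` is the slope of the latter. -/

open Filter Topology

/-- `f` is Gateaux differentiable at `x` with Gateaux derivative `df`:
for every direction `v` the limit `lim_{h→0} h⁻¹ (f (x + h v) - f x)` exists and equals `df v`. -/
def GateauxDifferentiableAt {E F : Type*} [NormedAddCommGroup E] [NormedSpace ℝ E]
    [NormedAddCommGroup F] [NormedSpace ℝ F] (f : E → F) (x : E) (df : E → F) : Prop :=
  ∀ v : E, Tendsto (fun h : ℝ => h⁻¹ • (f (x + h • v) - f x)) (𝓝[≠] (0 : ℝ)) (𝓝 (df v))

section

variable {E F : Type*} [NormedAddCommGroup E] [NormedSpace ℝ E]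
  [NormedAddCommGroup F] [NormedSpace ℝ F]

theorem LipschitzOnWith.tendsto_smul_sub_comp {f : E → F} {U : Set E} {L : NNReal}
    (hf : LipschitzOnWith L f U) {ι : Type*} {l : Filter ι} {c : ι → ℝ} {g₁ g₂ : ι → E}
    (h₁ : ∀ᶠ i in l, g₁ i ∈ U) (h₂ : ∀ᶠ i in l, g₂ i ∈ U)
    (h : Tendsto (fun i => c i • (g₁ i - g₂ i)) l (𝓝 0)) :
    Tendsto (fun i => c i • (f (g₁ i) - f (g₂ i))) l (𝓝 0) := by
  refine squeeze_zero_norm' ?_ (by simpa using h.norm.const_mul (L : ℝ))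
  filter_upwards [h₁, h₂] with i hi₁ hi₂
  calc ‖c i • (f (g₁ i) - f (g₂ i))‖ = |c i| * ‖f (g₁ i) - f (g₂ i)‖ := by
        rw [norm_smul, Real.norm_eq_abs]
    _ ≤ |c i| * ((L : ℝ) * ‖g₁ i - g₂ i‖) := by gcongr; exact hf.norm_sub_le hi₁ hi₂
    _ = (L : ℝ) * ‖c i • (g₁ i - g₂ i)‖ := by
        rw [norm_smul, Real.norm_eq_abs]; ring

theorem HasDerivAt.tendsto_inv_smul_sub_tangent {γ : ℝ → E} {v : E} {t : ℝ}
    (hγ : HasDerivAt γ v t) :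
    Tendsto (fun s => (s - t)⁻¹ • (γ s - (γ t + (s - t) • v))) (𝓝[≠] t) (𝓝 0) := by
  have hslope := (hasDerivAt_iff_tendsto_slope.mp hγ).sub_const v
  rw [sub_self] at hslope
  refine hslope.congr' ?_
  filter_upwards [self_mem_nhdsWithin] with s hs
  rw [slope_def_module, sub_add_eq_sub_sub, smul_sub _ (γ s - γ t),
    inv_smul_smul₀ (sub_ne_zero.mpr hs)]

end

theorem stmt0_general {E F : Type*} [NormedAddCommGroup E] [NormedSpace ℝ E]
    [NormedAddCommGroup F] [NormedSpace ℝ F]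
    (U : Set E) (hU : IsOpen U) (f : E → F) (x : E) (hx : x ∈ U)
    (L : NNReal) (hL : LipschitzOnWith L f U)
    (df : E → F) (hdf : GateauxDifferentiableAt f x df)
    (γ : ℝ → E)
    (hγ0 : γ 0 = x)
    (v : E) (hv : HasDerivAt γ v 0) :
    HasDerivAt (fun s => f (γ s)) (df v) 0 := by
  subst hγ0
  have hcurve : ∀ᶠ s in 𝓝[≠] (0 : ℝ), γ s ∈ U :=
    nhdsWithin_le_nhds (hv.continuousAt.eventually_mem (hU.mem_nhds hx))
  have hray : ∀ᶠ s in 𝓝[≠] (0 : ℝ), γ 0 + s • v ∈ U := by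
    refine nhdsWithin_le_nhds (Continuous.continuousAt ?_ |>.eventually_mem (hU.mem_nhds ?_))
    · fun_prop
    · simpa using hx
  have hfirst_order := hL.tendsto_smul_sub_comp hcurve hray
    (by simpa using hv.tendsto_inv_smul_sub_tangent)
  rw [hasDerivAt_iff_tendsto_slope]
  convert hfirst_order.add (hdf v) using 1
  · ext s
    rw [slope_def_module, sub_zero, ← smul_add, sub_add_sub_cancel]
  · rw [zero_add]

/-- If `f : U → F` is Lipschitz on the open set `U` and Gateaux differentiable
at `x ∈ U`, then `f` is strongly Gateaux differentiable at `x`: for every `C¹` curve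
`γ : (-a, a) → U` with `γ 0 = x` and `γ'(0) = v`, the map `s ↦ f (γ s)` is differentiable
at `s = 0` with derivative `df (x; v)`. -/
theorem stmt0 {E F : Type*} [NormedAddCommGroup E] [NormedSpace ℝ E]
    [NormedAddCommGroup F] [NormedSpace ℝ F]
    (U : Set E) (hU : IsOpen U) (f : E → F) (x : E) (hx : x ∈ U)
    (L : NNReal) (hL : LipschitzOnWith L f U)
    (df : E → F) (hdf : GateauxDifferentiableAt f x df)
    (a : ℝ) (ha : 0 < a) (γ : ℝ → E)
    (hγ : ContDiffOn ℝ 1 γ (Set.Ioo (-a) a))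
    (hγ0 : γ 0 = x) (hγU : Set.MapsTo γ (Set.Ioo (-a) a) U)
    (v : E) (hv : HasDerivAt γ v 0) :
    HasDerivAt (fun s => f (γ s)) (df v) 0 :=
  stmt0_general U hU f x hx L hL df hdf γ hγ0 v hv
end

section
/- Let η be a solution on [0, τ) of the stochastic Euler equation in Lagrangian form dη = B(η)dt + Σ(η)•dW on T Diff^s_μ(K) with π(η_0) = id. For every φ ∈ Diff^s_μ(K), almost surely the maximal existence times satisfy τ^{η_0} = τ^{η_0∘φ}, and η_t^{η_0} ∘ φ = η_t^{η_0∘φ} for all t ∈ [0, τ^{η_0}). -/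
open MeasureTheory Set Filter Topology
open scoped Manifold ENNReal NNReal Classical

/-- An abstract Itô stochastic integral `ξ ↦ ∫₀^· ξ_s dW_s` with respect to a Wiener process
with values in `E`, acting on operator-valued integrands with values in an arbitrary normed
space, together with its basic properties (path continuity and localization). -/
structure StochasticIntegral (Ω : Type) [m0 : MeasurableSpace Ω] (μ : Measure Ω)
    (ℱ : Filtration ℝ m0) (E : Type) [NormedAddCommGroup E] [NormedSpace ℝ E] where
  SI : ∀ (G : Type) [NormedAddCommGroup G] [NormedSpace ℝ G],
    (ℝ → Ω → (E →L[ℝ] G)) → ℝ → Ω → G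
  cont : ∀ (G : Type) [NormedAddCommGroup G] [NormedSpace ℝ G]
    (ξ : ℝ → Ω → (E →L[ℝ] G)), ∀ᵐ ω ∂μ, Continuous fun t => SI G ξ t ω
  localization : ∀ (G : Type) [NormedAddCommGroup G] [NormedSpace ℝ G]
    (ξ₁ ξ₂ : ℝ → Ω → (E →L[ℝ] G)) (σc : Ω → ℝ),
    (∀ᵐ ω ∂μ, ∀ s ∈ Icc (0 : ℝ) (σc ω), ξ₁ s ω = ξ₂ s ω) →
    ∀ᵐ ω ∂μ, ∀ t ∈ Icc (0 : ℝ) (σc ω), SI G ξ₁ t ω = SI G ξ₂ t ω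

variable {Ω : Type} [m0 : MeasurableSpace Ω] {μ : Measure Ω} {ℱ : Filtration ℝ m0}
variable {E : Type} [NormedAddCommGroup E] [NormedSpace ℝ E]

section ManifoldSDE

variable {Hm : Type} [NormedAddCommGroup Hm] [InnerProductSpace ℝ Hm]
variable {M : Type} [TopologicalSpace M] [ChartedSpace Hm M]
  [IsManifold (𝓘(ℝ, Hm)) (⊤ : ℕ∞) M]

/-- The trace term `tr_𝓗[D(Dh ∘ σ) ∘ σ](x) = Σ_k [D(Dh ∘ σ)(x) (σ(x) e_k)] (e_k)` appearing
in the definition of a solution of a Stratonovich SDE on a manifold, where `(e_k)` is an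
orthonormal basis of the RKHS of the noise. -/
noncomputable def itoTrace (e : ℕ → E) (σ : M → (E →L[ℝ] Hm))
    {G : Type} [NormedAddCommGroup G] [NormedSpace ℝ G] (h : M → G) (x : M) : G :=
  tsum fun k : ℕ =>
    (show E →L[ℝ] G from
      mfderiv (𝓘(ℝ, Hm)) (𝓘(ℝ, E →L[ℝ] G))
        (fun y : M => show E →L[ℝ] G from
          (mfderiv (𝓘(ℝ, Hm)) (𝓘(ℝ, G)) h y).comp (σ y))
        x (σ x (e k))) (e k)

/-- `X` is a local solution on `[ρ, τ)` of the Stratonovich SDE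
`dX = b(X) dt + σ(X) • dW`, `X_ρ = ζ`, on the Hilbert manifold `M`: `X` is an adapted
process with continuous paths such that for every `C²` function `h : M → G` into a separable
Hilbert space the Itô-type identity
`h(X_t) = h(ζ) + ∫_ρ^t Dh∘b(X_r) dr + ∫_ρ^t Dh∘σ(X_r) dW_r
  + ½ ∫_ρ^t tr_𝓗[D(Dh∘σ)∘σ(X_r)] dr`
holds almost surely for all `t ∈ [ρ, τ)`.  (The coefficients are expressed in the canonical
trivialization `TangentSpace 𝓘(ℝ, Hm) x = Hm`.) -/
def IsLocalSolution (J : StochasticIntegral Ω μ ℱ E) (e : ℕ → E)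
    (b : M → Hm) (σ : M → (E →L[ℝ] Hm))
    (ρ : Ω → ℝ) (ζ : Ω → M) (τ : Ω → ℝ≥0∞) (X : ℝ → Ω → M) : Prop :=
  StronglyAdapted ℱ X ∧
  (∀ᵐ ω ∂μ, ContinuousOn (fun t => X t ω) {t : ℝ | ρ ω ≤ t ∧ ENNReal.ofReal t < τ ω}) ∧
  (∀ᵐ ω ∂μ, X (ρ ω) ω = ζ ω) ∧
  ∀ (G : Type) [NormedAddCommGroup G] [InnerProductSpace ℝ G] [CompleteSpace G]
    [SecondCountableTopology G],
    ∀ h : M → G, ContMDiff (𝓘(ℝ, Hm)) (𝓘(ℝ, G)) 2 h →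
    ∀ᵐ ω ∂μ, ∀ t, ρ ω ≤ t → ENNReal.ofReal t < τ ω →
      h (X t ω) = h (ζ ω)
        + (∫ r in (ρ ω)..t,
            show G from mfderiv (𝓘(ℝ, Hm)) (𝓘(ℝ, G)) h (X r ω) (b (X r ω)))
        + J.SI G (fun r ω' =>
            if ρ ω' ≤ r ∧ ENNReal.ofReal r < τ ω' then
              show E →L[ℝ] G from
                (mfderiv (𝓘(ℝ, Hm)) (𝓘(ℝ, G)) h (X r ω')).comp (σ (X r ω'))
            else 0) t ω
        + (2 : ℝ)⁻¹ • (∫ r in (ρ ω)..t, itoTrace e σ h (X r ω))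

/-- The partial order on local solutions:
`(X₁, τ₁) ⪯ (X₂, τ₂)` iff a.s. `τ₁ ≤ τ₂` and `X₁ = X₂` on `[ρ, τ₁)`. -/
def SolLE (ρ : Ω → ℝ) (X₁ : ℝ → Ω → M) (τ₁ : Ω → ℝ≥0∞)
    (X₂ : ℝ → Ω → M) (τ₂ : Ω → ℝ≥0∞) : Prop :=
  ∀ᵐ ω ∂μ, τ₁ ω ≤ τ₂ ω ∧ ∀ t, ρ ω ≤ t → ENNReal.ofReal t < τ₁ ω → X₁ t ω = X₂ t ω

end ManifoldSDE

/-!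
Right translation by `φ` is a `C²` diffeomorphism `Φ` of the state space that maps the drift and
the diffusion coefficient to themselves. Along a diffeomorphism the chain rule
`D(h ∘ Φ) = Dh ∘ DΦ` holds for every `h`, differentiable or not, so the Itô identity of a
solution `X` tested against `h ∘ Φ` is exactly the Itô identity of `Φ ∘ X` tested against `h`.
Hence `Φ ∘ η^{η₀}` is a local solution started at `η₀ ∘ φ`, and `Φ⁻¹ ∘ η^{η₀ ∘ φ}` one started at
`η₀`; maximality of both solutions gives `τ^{η₀} ≤ τ^{η₀ ∘ φ} ≤ τ^{η₀}` and the equality of paths.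
-/

section DiffeomorphChainRule

variable {E₁ E₂ E₃ H₁ H₂ H₃ : Type*}
  [NormedAddCommGroup E₁] [NormedSpace ℝ E₁] [TopologicalSpace H₁]
  [NormedAddCommGroup E₂] [NormedSpace ℝ E₂] [TopologicalSpace H₂]
  [NormedAddCommGroup E₃] [NormedSpace ℝ E₃] [TopologicalSpace H₃]
  {I₁ : ModelWithCorners ℝ E₁ H₁} {I₂ : ModelWithCorners ℝ E₂ H₂} {I₃ : ModelWithCorners ℝ E₃ H₃}
  {M₁ M₂ M₃ : Type*} [TopologicalSpace M₁] [ChartedSpace H₁ M₁]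
  [TopologicalSpace M₂] [ChartedSpace H₂ M₂] [TopologicalSpace M₃] [ChartedSpace H₃ M₃]
  {n : WithTop ℕ∞}

theorem mfderiv_comp_diffeomorph (Φ : M₁ ≃ₘ^n⟮I₁, I₂⟯ M₂) (hn : n ≠ 0) (f : M₂ → M₃) (x : M₁) :
    mfderiv I₁ I₃ (fun y => f (Φ y)) x = (mfderiv I₂ I₃ f (Φ x)).comp (mfderiv I₁ I₂ Φ x) := by
  by_cases hf : MDifferentiableAt I₂ I₃ f (Φ x)
  · exact mfderiv_comp x hf (Φ.mdifferentiable hn x)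
  · have hfΦ : ¬MDifferentiableAt I₁ I₃ (fun y => f (Φ y)) x := fun hfΦ => hf <| by
      have h := MDifferentiableAt.comp (I' := I₁) (g := fun y => f (Φ y)) (Φ x)
        (by rwa [Φ.symm_apply_apply]) (Φ.symm.mdifferentiable hn (Φ x))
      simpa only [Function.comp_def, Φ.apply_symm_apply] using h
    rw [mfderiv_zero_of_not_mdifferentiableAt hf, mfderiv_zero_of_not_mdifferentiableAt hfΦ]
    rfl

theorem mfderiv_symm_mfderiv_apply (Φ : M₁ ≃ₘ^n⟮I₁, I₂⟯ M₂) (hn : n ≠ 0) (x : M₁) (v : E₁) :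
    mfderiv I₂ I₁ (Φ.symm : M₂ → M₁) (Φ x) (mfderiv I₁ I₂ Φ x v) = v := by
  have h := mfderiv_comp_diffeomorph (I₃ := I₁) Φ hn (Φ.symm : M₂ → M₁) x
  rw [show (fun y => Φ.symm (Φ y)) = id from funext Φ.symm_apply_apply, mfderiv_id] at h
  exact (DFunLike.congr_fun h v).symm

end DiffeomorphChainRule

section SDESymmetry

variable {Hm : Type} [NormedAddCommGroup Hm] [InnerProductSpace ℝ Hm]
  {M : Type} [TopologicalSpace M] [ChartedSpace Hm M]

structure IsSDESymmetry (Φ : M ≃ₘ^2⟮𝓘(ℝ, Hm), 𝓘(ℝ, Hm)⟯ M) (b : M → Hm)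
    (σ : M → (E →L[ℝ] Hm)) : Prop where
  drift : ∀ x, mfderiv 𝓘(ℝ, Hm) 𝓘(ℝ, Hm) Φ x (b x) = b (Φ x)
  diffusion : ∀ x w, mfderiv 𝓘(ℝ, Hm) 𝓘(ℝ, Hm) Φ x (σ x w) = σ (Φ x) w

namespace IsSDESymmetry

variable {Φ : M ≃ₘ^2⟮𝓘(ℝ, Hm), 𝓘(ℝ, Hm)⟯ M} {b : M → Hm} {σ : M → (E →L[ℝ] Hm)}
  {G : Type} [NormedAddCommGroup G] [NormedSpace ℝ G]

theorem symm (hΦ : IsSDESymmetry Φ b σ) : IsSDESymmetry Φ.symm b σ where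
  drift x := by
    have h := mfderiv_symm_mfderiv_apply Φ two_ne_zero (Φ.symm x) (b (Φ.symm x))
    rwa [hΦ.drift, Φ.apply_symm_apply] at h
  diffusion x w := by
    have h := mfderiv_symm_mfderiv_apply Φ two_ne_zero (Φ.symm x) (σ (Φ.symm x) w)
    rwa [hΦ.diffusion, Φ.apply_symm_apply] at h

theorem mfderiv_comp_drift (hΦ : IsSDESymmetry Φ b σ) (h : M → G) (x : M) :
    mfderiv 𝓘(ℝ, Hm) 𝓘(ℝ, G) (fun y => h (Φ y)) x (b x)
      = mfderiv 𝓘(ℝ, Hm) 𝓘(ℝ, G) h (Φ x) (b (Φ x)) := by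
  rw [mfderiv_comp_diffeomorph Φ two_ne_zero]
  exact congrArg (mfderiv 𝓘(ℝ, Hm) 𝓘(ℝ, G) h (Φ x)) (hΦ.drift x)

theorem mfderiv_comp_comp_diffusion (hΦ : IsSDESymmetry Φ b σ) (h : M → G) (x : M) :
    (mfderiv 𝓘(ℝ, Hm) 𝓘(ℝ, G) (fun y => h (Φ y)) x).comp (σ x)
      = (mfderiv 𝓘(ℝ, Hm) 𝓘(ℝ, G) h (Φ x)).comp (σ (Φ x)) := by
  rw [mfderiv_comp_diffeomorph Φ two_ne_zero]
  ext w
  exact congrArg (mfderiv 𝓘(ℝ, Hm) 𝓘(ℝ, G) h (Φ x)) (hΦ.diffusion x w)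

theorem itoTrace_comp [IsManifold 𝓘(ℝ, Hm) (⊤ : ℕ∞) M] (hΦ : IsSDESymmetry Φ b σ) (e : ℕ → E)
    (h : M → G) (x : M) :
    itoTrace e σ (fun y => h (Φ y)) x = itoTrace e σ h (Φ x) := by
  have hcomp : (fun y => show E →L[ℝ] G from
        (mfderiv 𝓘(ℝ, Hm) 𝓘(ℝ, G) (fun z => h (Φ z)) y).comp (σ y))
      = fun y => (mfderiv 𝓘(ℝ, Hm) 𝓘(ℝ, G) h (Φ y)).comp (σ (Φ y)) :=
    funext (hΦ.mfderiv_comp_comp_diffusion h)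
  unfold itoTrace
  rw [hcomp]
  refine tsum_congr fun k => ?_
  exact congrArg (fun L : E →L[ℝ] G => L (e k)) <| DFunLike.congr_fun
    (hΦ.mfderiv_comp_comp_diffusion
      (fun y => show E →L[ℝ] G from (mfderiv 𝓘(ℝ, Hm) 𝓘(ℝ, G) h y).comp (σ y)) x) (e k)

end IsSDESymmetry

end SDESymmetry

theorem IsLocalSolution.map_symmetry {Hm : Type} [NormedAddCommGroup Hm] [InnerProductSpace ℝ Hm]
    {M : Type} [TopologicalSpace M] [ChartedSpace Hm M] [IsManifold 𝓘(ℝ, Hm) (⊤ : ℕ∞) M]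
    {J : StochasticIntegral Ω μ ℱ E} {e : ℕ → E} {b : M → Hm} {σ : M → (E →L[ℝ] Hm)}
    {ρ : Ω → ℝ} {ζ : Ω → M} {τ : Ω → ℝ≥0∞} {X : ℝ → Ω → M}
    (hX : IsLocalSolution J e b σ ρ ζ τ X) {Φ : M ≃ₘ^2⟮𝓘(ℝ, Hm), 𝓘(ℝ, Hm)⟯ M}
    (hΦ : IsSDESymmetry Φ b σ) :
    IsLocalSolution J e b σ ρ (fun ω => Φ (ζ ω)) τ (fun t ω => Φ (X t ω)) := by
  obtain ⟨hadapted, hcont, hinit, hito⟩ := hX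
  refine ⟨fun t => Φ.continuous.comp_stronglyMeasurable (hadapted t), ?_, ?_, ?_⟩
  · filter_upwards [hcont] with ω hω
    exact Φ.continuous.comp_continuousOn hω
  · filter_upwards [hinit] with ω hω
    rw [hω]
  · intro G _ _ _ _ h hh
    filter_upwards [hito G (fun y => h (Φ y)) (hh.comp Φ.contMDiff)] with ω hω t ht hτ
    simpa only [hΦ.mfderiv_comp_drift, hΦ.mfderiv_comp_comp_diffusion, hΦ.itoTrace_comp]
      using hω t ht hτ

theorem stmt16_general {Ω : Type} [m0 : MeasurableSpace Ω] {μ : Measure Ω}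
    {ℱ : Filtration ℝ m0}
    {E : Type} [NormedAddCommGroup E] [NormedSpace ℝ E]
    {Hm : Type} [NormedAddCommGroup Hm] [InnerProductSpace ℝ Hm]
    {M : Type} [TopologicalSpace M] [ChartedSpace Hm M] [IsManifold (𝓘(ℝ, Hm)) (⊤ : ℕ∞) M]
    (J : StochasticIntegral Ω μ ℱ E) (e : ℕ → E)
    (b : M → Hm) (σ : M → (E →L[ℝ] Hm))
    -- the right translation `Rφ : V ↦ V ∘ φ` and its inverse `Rψ : V ↦ V ∘ φ⁻¹`,
    -- both of class `C²`
    (Rφ Rψ : M → M)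
    (hRφ : ContMDiff (𝓘(ℝ, Hm)) (𝓘(ℝ, Hm)) 2 Rφ)
    (hRψ : ContMDiff (𝓘(ℝ, Hm)) (𝓘(ℝ, Hm)) 2 Rψ)
    (hinv₁ : ∀ x, Rψ (Rφ x) = x) (hinv₂ : ∀ x, Rφ (Rψ x) = x)
    -- right-equivariance of the drift (geodesic spray): `B(V) ∘ φ = B(V ∘ φ)`
    (hbequiv : ∀ x : M,
      (show Hm from mfderiv (𝓘(ℝ, Hm)) (𝓘(ℝ, Hm)) Rφ x (b x)) = b (Rφ x))
    -- right-equivariance of the diffusion coefficient: `[Σ(V) ∘ φ] w = Σ(V ∘ φ) w`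
    (hσequiv : ∀ (x : M) (w : E),
      (show Hm from mfderiv (𝓘(ℝ, Hm)) (𝓘(ℝ, Hm)) Rφ x (σ x w)) = σ (Rφ x) w)
    -- `η` is the maximal solution with initial datum `η₀` (at time `0`)
    (η₀ : Ω → M) (τX : Ω → ℝ≥0∞) (X : ℝ → Ω → M)
    (hX : IsLocalSolution J e b σ (fun _ => (0 : ℝ)) η₀ τX X)
    (hXmax : ∀ (Z : ℝ → Ω → M) (τZ : Ω → ℝ≥0∞),
      IsLocalSolution J e b σ (fun _ => (0 : ℝ)) η₀ τZ Z →
      SolLE (μ := μ) (fun _ => (0 : ℝ)) Z τZ X τX)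
    -- `Y` is the maximal solution with initial datum `η₀ ∘ φ`
    (τY : Ω → ℝ≥0∞) (Y : ℝ → Ω → M)
    (hY : IsLocalSolution J e b σ (fun _ => (0 : ℝ)) (fun ω => Rφ (η₀ ω)) τY Y)
    (hYmax : ∀ (Z : ℝ → Ω → M) (τZ : Ω → ℝ≥0∞),
      IsLocalSolution J e b σ (fun _ => (0 : ℝ)) (fun ω => Rφ (η₀ ω)) τZ Z →
      SolLE (μ := μ) (fun _ => (0 : ℝ)) Z τZ Y τY) :
    ∀ᵐ ω ∂μ, τX ω = τY ω ∧
      ∀ t : ℝ, 0 ≤ t → ENNReal.ofReal t < τX ω → Rφ (X t ω) = Y t ω := by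
  let Φ : M ≃ₘ^2⟮𝓘(ℝ, Hm), 𝓘(ℝ, Hm)⟯ M :=
    { toFun := Rφ, invFun := Rψ, left_inv := hinv₁, right_inv := hinv₂
      contMDiff_toFun := hRφ, contMDiff_invFun := hRψ }
  have hΦ : IsSDESymmetry Φ b σ := ⟨hbequiv, hσequiv⟩
  have hXY := hYmax _ _ (hX.map_symmetry hΦ)
  have hY' : IsLocalSolution J e b σ (fun _ => (0 : ℝ)) (fun ω => Φ (η₀ ω)) τY Y := hY
  have hYX := hXmax _ _ (by simpa only [Φ.symm_apply_apply] using hY'.map_symmetry hΦ.symm)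
  filter_upwards [hXY, hYX] with ω hXY hYX
  exact ⟨le_antisymm hXY.1 hYX.1, hXY.2⟩

/-- Equivariance of the stochastic Euler equation in Lagrangian form.
Here `M` plays the role of `T Diff^s_μ(K)` (a separable Hilbert manifold), `b` the role of
the Ebin–Marsden geodesic spray `B` of the right-invariant `L²` metric, and `σ` the role of
the (vertical-lift) diffusion coefficient `Σ`.  For a volume-preserving diffeomorphism
`φ ∈ Diff^s_μ(K)`, `Rφ : M → M` is the `C²` right-translation `V ↦ V ∘ φ` (with inverse
`Rψ : V ↦ V ∘ φ⁻¹`), under which both coefficients are equivariant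
(`B(V) ∘ φ = B(V ∘ φ)` and `[Σ(V) ∘ φ] w = Σ(V ∘ φ) w`).
If `η = η^{η₀}` is the maximal solution with initial datum `η₀` and lifetime `τ^{η₀}`, and
`η^{η₀ ∘ φ}` is the maximal solution with initial datum `η₀ ∘ φ` and lifetime `τ^{η₀ ∘ φ}`,
then almost surely `τ^{η₀} = τ^{η₀ ∘ φ}` and
`η_t^{η₀} ∘ φ = η_t^{η₀ ∘ φ}` for all `t ∈ [0, τ^{η₀})`. -/
theorem stmt16 {Ω : Type} [m0 : MeasurableSpace Ω] {μ : Measure Ω} [IsProbabilityMeasure μ]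
    {ℱ : Filtration ℝ m0}
    {E : Type} [NormedAddCommGroup E] [NormedSpace ℝ E]
    {Hm : Type} [NormedAddCommGroup Hm] [InnerProductSpace ℝ Hm] [CompleteSpace Hm]
    [SecondCountableTopology Hm]
    {M : Type} [TopologicalSpace M] [ChartedSpace Hm M] [T2Space M]
    [SecondCountableTopology M] [IsManifold (𝓘(ℝ, Hm)) (⊤ : ℕ∞) M]
    (J : StochasticIntegral Ω μ ℱ E) (e : ℕ → E)
    (b : M → Hm) (σ : M → (E →L[ℝ] Hm))
    -- the right translation `Rφ : V ↦ V ∘ φ` and its inverse `Rψ : V ↦ V ∘ φ⁻¹`,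
    -- both of class `C²`
    (Rφ Rψ : M → M)
    (hRφ : ContMDiff (𝓘(ℝ, Hm)) (𝓘(ℝ, Hm)) 2 Rφ)
    (hRψ : ContMDiff (𝓘(ℝ, Hm)) (𝓘(ℝ, Hm)) 2 Rψ)
    (hinv₁ : ∀ x, Rψ (Rφ x) = x) (hinv₂ : ∀ x, Rφ (Rψ x) = x)
    -- right-equivariance of the drift (geodesic spray): `B(V) ∘ φ = B(V ∘ φ)`
    (hbequiv : ∀ x : M,
      (show Hm from mfderiv (𝓘(ℝ, Hm)) (𝓘(ℝ, Hm)) Rφ x (b x)) = b (Rφ x))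
    -- right-equivariance of the diffusion coefficient: `[Σ(V) ∘ φ] w = Σ(V ∘ φ) w`
    (hσequiv : ∀ (x : M) (w : E),
      (show Hm from mfderiv (𝓘(ℝ, Hm)) (𝓘(ℝ, Hm)) Rφ x (σ x w)) = σ (Rφ x) w)
    -- `η` is the maximal solution with initial datum `η₀` (at time `0`)
    (η₀ : Ω → M) (τX : Ω → ℝ≥0∞) (X : ℝ → Ω → M)
    (hX : IsLocalSolution J e b σ (fun _ => (0 : ℝ)) η₀ τX X)
    (hXmax : ∀ (Z : ℝ → Ω → M) (τZ : Ω → ℝ≥0∞),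
      IsLocalSolution J e b σ (fun _ => (0 : ℝ)) η₀ τZ Z →
      SolLE (μ := μ) (fun _ => (0 : ℝ)) Z τZ X τX)
    -- `Y` is the maximal solution with initial datum `η₀ ∘ φ`
    (τY : Ω → ℝ≥0∞) (Y : ℝ → Ω → M)
    (hY : IsLocalSolution J e b σ (fun _ => (0 : ℝ)) (fun ω => Rφ (η₀ ω)) τY Y)
    (hYmax : ∀ (Z : ℝ → Ω → M) (τZ : Ω → ℝ≥0∞),
      IsLocalSolution J e b σ (fun _ => (0 : ℝ)) (fun ω => Rφ (η₀ ω)) τZ Z →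
      SolLE (μ := μ) (fun _ => (0 : ℝ)) Z τZ Y τY) :
    ∀ᵐ ω ∂μ, τX ω = τY ω ∧
      ∀ t : ℝ, 0 ≤ t → ENNReal.ofReal t < τX ω → Rφ (X t ω) = Y t ω :=
  stmt16_general (m0 := m0) J e b σ Rφ Rψ hRφ hRψ hinv₁ hinv₂ hbequiv hσequiv η₀ τX X hX hXmax τY Y
    hY hYmax
end
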